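/- arXiv:2408.09569 — 9 statements merged into one kernel-verified Lean document; each statement's English description precedes it below -/
import Mathlib

section
/- Let f : [0,1] → [0,1] be continuous and let I_1, I_2, ..., I_k be closed subintervals of [0,1] such that f(I_j) ⊇ I_{j+1} for j = 1,...,k-1 and f(I_k) ⊇ I_1. Then there exists a point x ∈ I_1 with f^k(x) = x and f^j(x) ∈ I_{j+1} for j = 0, 1, ..., k-1. -/
/-!
Pull the loop back one interval at a time: if `f` maps `L` onto a set containing the interval
`K`, some closed subinterval of `L` is mapped exactly onto `K`. Going once around the loop
produces a closed interval `J ⊆ I₁` whose points follow the itinerary `I₁, …, I_k` and with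
`f^k(J) = I₁ ⊇ J`; the intermediate value theorem then gives a fixed point of `f^k` in `J`.
-/

open Set
open Fin.NatCast

theorem mem_uIcc_or_mem_uIcc_of_notMem_uIcc {δ : Type*} [LinearOrder δ] {c d z : δ}
    (hz : z ∉ uIcc c d) : c ∈ uIcc z d ∨ d ∈ uIcc c z := by
  simp only [mem_uIcc] at *
  grind

section

variable {α δ : Type*} [ConditionallyCompleteLinearOrder α] [TopologicalSpace α]
  [OrderTopology α] [DenselyOrdered α] [LinearOrder δ] [TopologicalSpace δ]
  [OrderClosedTopology δ]

theorem ContinuousOn.exists_Icc_subset_image_eq_uIcc {g : α → δ} {u v : α} (huv : u ≤ v)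
    (hg : ContinuousOn g (Icc u v)) :
    ∃ s t, s ≤ t ∧ Icc s t ⊆ Icc u v ∧ g '' Icc s t = uIcc (g u) (g v) := by
  set T := Icc u v ∩ g ⁻¹' {g u}
  have hTbdd : BddAbove T := ⟨v, fun x hx => hx.1.2⟩
  have hsT : sSup T ∈ T :=
    (hg.preimage_isClosed_of_isClosed isClosed_Icc isClosed_singleton).csSup_mem
      ⟨u, left_mem_Icc.2 huv, rfl⟩ hTbdd
  set s := sSup T
  set S := Icc s v ∩ g ⁻¹' {g v}
  have hSbdd : BddBelow S := ⟨s, fun x hx => hx.1.1⟩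
  have htS : sInf S ∈ S :=
    ((hg.mono (Icc_subset_Icc hsT.1.1 le_rfl)).preimage_isClosed_of_isClosed isClosed_Icc
      isClosed_singleton).csInf_mem ⟨v, right_mem_Icc.2 hsT.1.2, rfl⟩ hSbdd
  set t := sInf S
  have hst : Icc s t ⊆ Icc u v := Icc_subset_Icc hsT.1.1 htS.1.2
  have hgs : g s = g u := hsT.2
  have hgt : g t = g v := htS.2
  have ivt {x y : α} (hxy : x ≤ y) (hsub : Icc x y ⊆ Icc s t) :
      uIcc (g x) (g y) ⊆ g '' Icc x y := by
    simpa only [uIcc_of_le hxy] using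
      intermediate_value_uIcc (hg.mono ((uIcc_of_le hxy).trans_subset (hsub.trans hst)))
  refine ⟨s, t, htS.1.1, hst, subset_antisymm ?_ (hgs ▸ hgt ▸ ivt htS.1.1 subset_rfl)⟩
  rintro _ ⟨x, hx, rfl⟩
  by_contra hgx
  -- `s` is the last preimage of `g u`, and `t` the first preimage of `g v` after `s`
  rcases mem_uIcc_or_mem_uIcc_of_notMem_uIcc hgx with hu | hv
  · obtain ⟨y, hy, hgy⟩ := ivt hx.2 (Icc_subset_Icc_left hx.1) (hgt ▸ hu)
    have hys : y ≤ s := le_csSup hTbdd ⟨hst ⟨hx.1.trans hy.1, hy.2⟩, hgy⟩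
    exact hgx (le_antisymm (hy.1.trans hys) hx.1 ▸ hgs ▸ left_mem_uIcc)
  · obtain ⟨y, hy, hgy⟩ := ivt hx.1 (Icc_subset_Icc_right hx.2) (hgs ▸ hv)
    have hty : t ≤ y := csInf_le hSbdd ⟨⟨hy.1, hy.2.trans (hx.2.trans htS.1.2)⟩, hgy⟩
    exact hgx (le_antisymm hx.2 (hty.trans hy.2) ▸ hgt ▸ right_mem_uIcc)

theorem ContinuousOn.exists_Icc_subset_image_eq {g : α → δ} {p q : α} {c d : δ}
    (hg : ContinuousOn g (Icc p q)) (hcd : c ≤ d) (hsurj : SurjOn g (Icc p q) (Icc c d)) :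
    ∃ p' q', p' ≤ q' ∧ Icc p' q' ⊆ Icc p q ∧ g '' Icc p' q' = Icc c d := by
  obtain ⟨u, hu, rfl⟩ := hsurj (left_mem_Icc.2 hcd)
  obtain ⟨v, hv, rfl⟩ := hsurj (right_mem_Icc.2 hcd)
  rw [← uIcc_of_le hcd]
  rcases le_total u v with huv | hvu
  · obtain ⟨s, t, hst, hsub, himg⟩ :=
      (hg.mono (Icc_subset_Icc hu.1 hv.2)).exists_Icc_subset_image_eq_uIcc huv
    exact ⟨s, t, hst, hsub.trans (Icc_subset_Icc hu.1 hv.2), himg⟩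
  · obtain ⟨s, t, hst, hsub, himg⟩ :=
      (hg.mono (Icc_subset_Icc hv.1 hu.2)).exists_Icc_subset_image_eq_uIcc hvu
    exact ⟨s, t, hst, hsub.trans (Icc_subset_Icc hv.1 hu.2), himg.trans (uIcc_comm _ _)⟩

theorem exists_Icc_iterate_itinerary {f : α → α} {a b : ℕ → α} (m : ℕ)
    (hf : ∀ j < m, ContinuousOn f (Icc (a j) (b j))) (hab : a m ≤ b m)
    (hcover : ∀ j < m, SurjOn f (Icc (a j) (b j)) (Icc (a (j + 1)) (b (j + 1)))) :
    ∃ p q, p ≤ q ∧ ContinuousOn f^[m] (Icc p q) ∧ SurjOn f^[m] (Icc p q) (Icc (a m) (b m)) ∧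
      ∀ j ≤ m, MapsTo f^[j] (Icc p q) (Icc (a j) (b j)) := by
  induction m generalizing a b with
  | zero =>
    exact ⟨a 0, b 0, hab, continuousOn_id, surjOn_id _, fun j hj => by
      simpa [Nat.le_zero.1 hj] using mapsTo_id _⟩
  | succ m ih =>
    -- follow the itinerary from the second interval on, then pull back into the first one
    obtain ⟨p, q, hpq, hcont, hsurj, hmaps⟩ :=
      ih (a := fun j => a (j + 1)) (b := fun j => b (j + 1)) (fun j hj => hf _ (by omega)) hab
        (fun j hj => hcover _ (by omega))
    obtain ⟨p', q', hpq', hsub, himg⟩ := (hf 0 m.succ_pos).exists_Icc_subset_image_eq hpq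
      ((hcover 0 m.succ_pos).mono subset_rfl (hmaps 0 m.zero_le))
    have hmapsTo : MapsTo f (Icc p' q') (Icc p q) := himg ▸ mapsTo_image f _
    refine ⟨p', q', hpq', ?_, ?_, ?_⟩
    · rw [Function.iterate_succ]
      exact hcont.comp ((hf 0 m.succ_pos).mono hsub) hmapsTo
    · rw [Function.iterate_succ]
      exact hsurj.comp (himg ▸ surjOn_image f _)
    · rintro (_ | j) hj
      · exact hsub
      · rw [Function.iterate_succ]
        exact (hmaps j (by omega)).comp hmapsTo

end

theorem loop_of_intervals_periodic_point_general
    (f : ℝ → ℝ) (hf : ContinuousOn f (Set.Icc 0 1))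
    (n : ℕ) (a b : Fin (n + 1) → ℝ)
    (hab : ∀ j, a j ≤ b j)
    (hsub : ∀ j, Set.Icc (a j) (b j) ⊆ Set.Icc 0 1)
    (hcover : ∀ j : Fin (n + 1), Set.Icc (a (j + 1)) (b (j + 1)) ⊆ f '' Set.Icc (a j) (b j)) :
    ∃ x ∈ Set.Icc (a 0) (b 0), f^[n + 1] x = x ∧
      ∀ j : Fin (n + 1), f^[(j : ℕ)] x ∈ Set.Icc (a j) (b j) := by
  obtain ⟨p, q, hpq, hcont, hsurj, hmaps⟩ :=
    exists_Icc_iterate_itinerary (f := f) (a := fun j : ℕ => a j) (b := fun j : ℕ => b j) (n + 1)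
      (fun j _ => hf.mono (hsub _)) (hab _) (fun j _ => by simpa [SurjOn] using hcover j)
  have hI₀ : Icc p q ⊆ Icc (a 0) (b 0) := fun x hx => by simpa using hmaps 0 (Nat.zero_le _) hx
  obtain ⟨x, hx, hfix⟩ := exists_mem_Icc_isFixedPt_of_surjOn hcont hpq
    (hsurj.mono subset_rfl (by simpa using hI₀))
  exact ⟨x, hI₀ hx, hfix, fun j => by simpa using hmaps j j.isLt.le hx⟩

/-- Given a loop of `k` (here `k = n+1 ≥ 1`) closed subintervals of
`[0,1]` each of which `f`-covers the next (cyclically), there is a point of the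
first interval whose orbit follows the loop and which is fixed by `f^[k]`. -/
theorem loop_of_intervals_periodic_point
    (f : ℝ → ℝ) (hf : ContinuousOn f (Set.Icc 0 1))
    (hmaps : Set.MapsTo f (Set.Icc 0 1) (Set.Icc 0 1))
    (n : ℕ) (a b : Fin (n + 1) → ℝ)
    (hab : ∀ j, a j ≤ b j)
    (hsub : ∀ j, Set.Icc (a j) (b j) ⊆ Set.Icc 0 1)
    (hcover : ∀ j : Fin (n + 1), Set.Icc (a (j + 1)) (b (j + 1)) ⊆ f '' Set.Icc (a j) (b j)) :
    ∃ x ∈ Set.Icc (a 0) (b 0), f^[n + 1] x = x ∧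
      ∀ j : Fin (n + 1), f^[(j : ℕ)] x ∈ Set.Icc (a j) (b j) :=
  loop_of_intervals_periodic_point_general f hf n a b hab hsub hcover
end

section
/- Let f : [0,1] → [0,1] be continuous with a unique fixed point a, satisfying f(x) > x for x < a and f(x) < x for x > a. If P is a periodic orbit of f of period greater than 1, then the leftmost point of P and the rightmost point of P are both images under f of points of P lying on the opposite side of a (i.e., the leftmost point of P is f(y) for some y ∈ P with y > a, and the rightmost point of P is f(z) for some z ∈ P with z < a). -/
/-- For `f` continuous on `[0,1]` with unique fixed point `a`,
`f x > x` left of `a`, `f x < x` right of `a`, the leftmost and rightmost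
points of any periodic orbit `P` of period `> 1` are images of points of `P`
lying on the opposite side of `a`. -/
theorem endpoints_of_cycle_are_iblack
    (f : ℝ → ℝ) (hf : ContinuousOn f (Set.Icc 0 1))
    (hmaps : Set.MapsTo f (Set.Icc 0 1) (Set.Icc 0 1))
    (a : ℝ) (ha : a ∈ Set.Icc 0 1) (hfix : f a = a)
    (hleft : ∀ x ∈ Set.Icc 0 1, x < a → x < f x)
    (hright : ∀ x ∈ Set.Icc 0 1, a < x → f x < x)
    (x0 : ℝ) (hx0 : x0 ∈ Set.Icc 0 1) (q : ℕ) (hq : 1 < q)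
    (hper : f^[q] x0 = x0)
    (P : Finset ℝ) (hPmem : ∀ w, w ∈ P ↔ ∃ i < q, f^[i] x0 = w)
    (hcard : P.card = q) (hPne : P.Nonempty) :
    (∃ y ∈ P, a < y ∧ f y = P.min' hPne) ∧
    (∃ z ∈ P, z < a ∧ f z = P.max' hPne) := by
  -- all iterates stay in [0,1]
  have hit : ∀ i, f^[i] x0 ∈ Set.Icc 0 1 := by
    intro i
    induction i with
    | zero => simpa using hx0
    | succ n ih => rw [Function.iterate_succ_apply']; exact hmaps ih
  have hmemIcc : ∀ w ∈ P, w ∈ Set.Icc 0 1 := by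
    intro w hw
    obtain ⟨i, _, rfl⟩ := (hPmem w).1 hw
    exact hit i
  -- a is not in P
  have haP : a ∉ P := by
    intro haP
    obtain ⟨i, hi, hia⟩ := (hPmem a).1 haP
    have hfa : ∀ k, f^[k] a = a := by
      intro k
      induction k with
      | zero => rfl
      | succ n ih => rw [Function.iterate_succ_apply', ih, hfix]
    have hx0a : x0 = a := by
      have : f^[q - i] (f^[i] x0) = f^[q - i + i] x0 := by
        rw [← Function.iterate_add_apply]
      rw [hia, hfa, Nat.sub_add_cancel hi.le, hper] at this
      exact this.symm
    have hsub : P ⊆ {a} := by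
      intro w hw
      obtain ⟨j, _, rfl⟩ := (hPmem w).1 hw
      simp [hx0a, hfa j]
    have := Finset.card_le_card hsub
    simp [hcard] at this
    omega
  -- every point of P has a preimage in P
  have hpre : ∀ w ∈ P, ∃ y ∈ P, f y = w := by
    intro w hw
    obtain ⟨i, hi, rfl⟩ := (hPmem w).1 hw
    rcases Nat.eq_zero_or_pos i with rfl | hpos
    · refine ⟨f^[q - 1] x0, (hPmem _).2 ⟨q - 1, by omega, rfl⟩, ?_⟩
      have hq1 : q = (q - 1) + 1 := by omega
      have : f (f^[q-1] x0) = f^[q] x0 := by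
        conv_rhs => rw [hq1, Function.iterate_succ_apply']
      simpa [hper] using this
    · refine ⟨f^[i - 1] x0, (hPmem _).2 ⟨i - 1, by omega, rfl⟩, ?_⟩
      have hi1 : i = (i - 1) + 1 := by omega
      conv_rhs => rw [hi1, Function.iterate_succ_apply']
  constructor
  · obtain ⟨y, hyP, hy⟩ := hpre _ (P.min'_mem hPne)
    refine ⟨y, hyP, ?_, hy⟩
    rcases lt_trichotomy y a with h | h | h
    · exact absurd (hy ▸ hleft y (hmemIcc y hyP) h) (not_lt.2 (P.min'_le y hyP))
    · exact absurd (h ▸ hyP) haP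
    · exact h
  · obtain ⟨z, hzP, hz⟩ := hpre _ (P.max'_mem hPne)
    refine ⟨z, hzP, ?_, hz⟩
    rcases lt_trichotomy z a with h | h | h
    · exact h
    · exact absurd (h ▸ hzP) haP
    · exact absurd (hz ▸ hright z (hmemIcc z hzP) h) (not_lt.2 (P.le_max' z hzP))
end

section
/- Let f : [0,1] → [0,1] be continuous with a unique fixed point a, and let P be a periodic orbit of f of period q > 1. Define m to be the number of points x ∈ P such that f(x) − x and f²(x) − f(x) have opposite signs. Then m is even and m ≥ 2. -/
open Finset

lemma sumShift_aux (q : ℕ) (b : ℕ → ZMod 2) (hb : b q = b 0) :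
    ∑ i ∈ Finset.range q, (b i + b (i + 1)) = 0 := by
  rw [Finset.sum_add_distrib]
  have h2 := Finset.sum_range_succ' b q
  have h3 := Finset.sum_range_succ b q
  have h1 : ∑ i ∈ Finset.range q, b (i + 1) = ∑ i ∈ Finset.range q, b i := by
    have h := h2.symm.trans h3
    rw [hb] at h
    exact add_right_cancel h
  rw [h1, ← two_mul]
  simp [show (2 : ZMod 2) = 0 from rfl]

/-- For `f` continuous on `[0,1]` with a unique fixed point `a`
and a periodic orbit `P` of period `q > 1`, the number `m` of points `x ∈ P`
where `f x - x` and `f (f x) - f x` have opposite signs is even and at least 2. -/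
theorem overrotation_count_even_and_pos
    (f : ℝ → ℝ) (hf : ContinuousOn f (Set.Icc 0 1))
    (hmaps : Set.MapsTo f (Set.Icc 0 1) (Set.Icc 0 1))
    (a : ℝ) (ha : a ∈ Set.Icc 0 1)
    (hfix : ∀ x ∈ Set.Icc 0 1, f x = x ↔ x = a)
    (x0 : ℝ) (hx0 : x0 ∈ Set.Icc 0 1) (q : ℕ) (hq : 1 < q)
    (hper : f^[q] x0 = x0)
    (P : Set ℝ) (hP : P = {w | ∃ i < q, f^[i] x0 = w})
    (hcard : P.ncard = q)
    (m : ℕ) (hm : m = {x ∈ P | (f x - x) * (f (f x) - f x) < 0}.ncard) :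
    Even m ∧ 2 ≤ m := by
  classical
  have hq0 : 0 < q := by omega
  set g : ℕ → ℝ := fun i => f^[i] x0 with hgdef
  have hfg : ∀ i, f (g i) = g (i + 1) := fun i =>
    (Function.iterate_succ_apply' f i x0).symm
  have hgmem : ∀ i, g i ∈ Set.Icc (0:ℝ) 1 := by
    intro i
    induction i with
    | zero => exact hx0
    | succ n ih =>
      rw [← hfg]
      exact hmaps ih
  have hgq : g q = g 0 := by simpa [hgdef] using hper
  have hgadd : ∀ i, g (i + q) = g i := by
    intro i
    simp only [hgdef, Function.iterate_add_apply, hper]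
  have hgmul : ∀ k i, g (i + q * k) = g i := by
    intro k
    induction k with
    | zero => simp
    | succ n ih =>
      intro i
      have h : i + q * (n + 1) = (i + q * n) + q := by ring
      rw [h, hgadd, ih]
  have hgmod : ∀ i, g (i % q) = g i := by
    intro i
    conv_rhs => rw [← Nat.mod_add_div i q]
    exact (hgmul (i / q) (i % q)).symm
  set T : Finset ℝ := (Finset.range q).image g with hT
  have hPT : P = ↑T := by
    rw [hP]
    ext w
    simp [hT, hgdef, eq_comm]
  have hinj : Set.InjOn g ↑(Finset.range q) := by
    rw [hPT, Set.ncard_coe_finset] at hcard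
    have : T.card = (Finset.range q).card := by simpa using hcard
    exact Finset.card_image_iff.mp this
  have hne : ∀ i < q, f (g i) ≠ g i := by
    intro i hi hfeq
    have h1 : g (i + 1) = g i := by rw [← hfg]; exact hfeq
    by_cases h : i + 1 < q
    · have := hinj (by simp [h]) (by simp [hi]) h1
      omega
    · have hi1 : i + 1 = q := by omega
      have h2 : g 0 = g i := by rw [← hgq, ← hi1]; exact h1
      have := hinj (by simp [hq0]) (by simp [hi]) h2
      omega
  set d : ℕ → ℝ := fun i => f (g (i % q)) - g (i % q) with hd
  have hdne : ∀ i, d i ≠ 0 := by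
    intro i
    have : i % q < q := Nat.mod_lt _ hq0
    exact sub_ne_zero_of_ne (hne _ this)
  have hdlt : ∀ i < q, d i = f (g i) - g i := by
    intro i hi
    simp [hd, Nat.mod_eq_of_lt hi]
  have hdsucc : ∀ i, d (i + 1) = f (g (i + 1)) - g (i + 1) := by
    intro i
    simp only [hd]
    rw [hgmod (i + 1)]
  have hcond : ∀ i < q,
      ((f (g i) - g i) * (f (f (g i)) - f (g i)) < 0 ↔ d i * d (i + 1) < 0) := by
    intro i hi
    rw [hdlt i hi, hdsucc i, hfg i]
  have hmT : m = ((Finset.range q).filter (fun i => d i * d (i + 1) < 0)).card := by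
    rw [hm, hPT]
    have h1 : {x ∈ (↑T : Set ℝ) | (f x - x) * (f (f x) - f x) < 0}
        = ↑(T.filter (fun x => (f x - x) * (f (f x) - f x) < 0)) := by
      simp [Finset.coe_filter]
    rw [h1, Set.ncard_coe_finset, hT, Finset.filter_image]
    rw [Finset.card_image_of_injOn (hinj.mono (by exact_mod_cast Finset.filter_subset _ _))]
    congr 1
    apply Finset.filter_congr
    intro i hi
    simp only [Finset.mem_range] at hi
    exact hcond i hi
  -- parity
  set b : ℕ → ZMod 2 := fun i => if 0 < d i then 0 else 1 with hb
  have hdq : d q = d 0 := by simp [hd, Nat.mod_self, Nat.zero_mod]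
  have hbq : b q = b 0 := by simp [hb, hdq]
  have hterm : ∀ i, ((if d i * d (i + 1) < 0 then 1 else 0 : ℕ) : ZMod 2)
      = b i + b (i + 1) := by
    intro i
    rcases (hdne i).lt_or_gt with hi | hi <;> rcases (hdne (i + 1)).lt_or_gt with hj | hj
    · rw [if_neg (by nlinarith)]
      simp [hb, if_neg (not_lt.mpr hi.le), if_neg (not_lt.mpr hj.le)]
      decide
    · rw [if_pos (by nlinarith)]
      simp [hb, if_neg (not_lt.mpr hi.le), if_pos hj]
    · rw [if_pos (by nlinarith)]
      simp [hb, if_pos hi, if_neg (not_lt.mpr hj.le)]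
    · rw [if_neg (by nlinarith)]
      simp [hb, if_pos hi, if_pos hj]
  have hm2 : (m : ZMod 2) = 0 := by
    rw [hmT, Finset.card_filter]
    rw [Nat.cast_sum]
    rw [Finset.sum_congr rfl (fun i _ => hterm i)]
    exact sumShift_aux q b hbq
  have heven : Even m := by
    have := (ZMod.natCast_eq_zero_iff m 2).mp hm2
    exact even_iff_two_dvd.mpr this
  have hm1 : m ≠ 0 := by
    intro h0
    have hall : ∀ i < q, ¬ (d i * d (i + 1) < 0) := by
      intro i hi hcon
      have hmem : i ∈ (Finset.range q).filter (fun i => d i * d (i + 1) < 0) :=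
        Finset.mem_filter.mpr ⟨Finset.mem_range.mpr hi, hcon⟩
      have : ((Finset.range q).filter (fun i => d i * d (i + 1) < 0)) = ∅ :=
        Finset.card_eq_zero.mp (by omega)
      rw [this] at hmem
      simp at hmem
    have hsign : ∀ i < q, (0 < d i ↔ 0 < d 0) := by
      intro i
      induction i with
      | zero => simp
      | succ n ih =>
        intro hn
        have hn' : n < q := by omega
        have h1 := hall n hn'
        have hdn := hdne n
        have hdn1 := hdne (n + 1)
        have hstep : (0 < d (n + 1) ↔ 0 < d n) := by
          constructor
          · intro h; by_contra hc; push_neg at hc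
            exact h1 (mul_neg_of_neg_of_pos (lt_of_le_of_ne hc hdn) h)
          · intro h; by_contra hc; push_neg at hc
            exact h1 (mul_neg_of_pos_of_neg h (lt_of_le_of_ne hc hdn1))
        exact hstep.trans (ih hn')
    have hTne : T.Nonempty := by
      refine ⟨g 0, ?_⟩
      simp [hT]
      exact ⟨0, hq0, rfl⟩
    rcases (hdne 0).lt_or_gt with hneg | hpos
    · -- all d i < 0 for i < q : take min
      set M := T.min' hTne with hM
      obtain ⟨i, hi, hgi⟩ := Finset.mem_image.mp (T.min'_mem hTne)
      rw [Finset.mem_range] at hi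
      have hdi : d i < 0 := by
        rcases (hdne i).lt_or_gt with h | h
        · exact h
        · exact absurd ((hsign i hi).mp h) (not_lt.mpr hneg.le)
      have hfM : f (g i) < g i := by
        have := hdlt i hi
        linarith [hdi, this.symm.le]
      have hfmem : f (g i) ∈ T := by
        rw [hfg, ← hgmod (i + 1)]
        simp [hT]
        exact ⟨(i + 1) % q, Nat.mod_lt _ hq0, rfl⟩
      have hge := T.min'_le _ hfmem
      rw [← hgi] at hge
      linarith
    · set M := T.max' hTne with hM
      obtain ⟨i, hi, hgi⟩ := Finset.mem_image.mp (T.max'_mem hTne)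
      rw [Finset.mem_range] at hi
      have hdi : 0 < d i := (hsign i hi).mpr hpos
      have hfM : g i < f (g i) := by
        have := hdlt i hi
        linarith
      have hfmem : f (g i) ∈ T := by
        rw [hfg, ← hgmod (i + 1)]
        simp [hT]
        exact ⟨(i + 1) % q, Nat.mod_lt _ hq0, rfl⟩
      have hle := T.le_max' _ hfmem
      rw [← hgi] at hle
      linarith
  refine ⟨heven, ?_⟩
  obtain ⟨k, hk⟩ := heven
  omega
end

section
/- Let p, q be coprime positive integers with q > 2p, let 0 ≤ r ≤ q − 2p, and let σ be the permutation of {1,...,q} defined by: σ(i) = i + p for 1 ≤ i ≤ r; σ(r+i) = q − i + 1 for 1 ≤ i ≤ p; σ(r+p+i) = p − i + 1 for 1 ≤ i ≤ p; σ(r+2p+i) = r + p + i for 1 ≤ i ≤ q − 2p − r. Then σ is a cyclic permutation, i.e., σ acts transitively on {1, ..., q}. -/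
/-! Label the residues `x = 0, …, q - 1` by `x ↦ x + 1` for `x < r + p` and by `x ↦ q + r + p - x` otherwise.
This labelling is a bijection onto `{1, …, q}` that conjugates the rotation `x ↦ x + p` to `σ`;
since `p` is coprime to `q` the rotation is a single `q`-cycle, hence so is `σ`. -/

theorem Nat.exists_add_mul_mod_eq {p q : ℕ} (hcop : p.Coprime q) (x : ℕ) {y : ℕ} (hy : y < q) :
    ∃ n, (x + n * p) % q = y := by
  have : NeZero q := ⟨by omega⟩
  let u := ZMod.unitOfCoprime p hcop
  set n := ((u⁻¹ : (ZMod q)ˣ) * ((y : ZMod q) - x) : ZMod q).val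
  refine ⟨n, ?_⟩
  have hcast : ((x + n * p : ℕ) : ZMod q) = y := by
    push_cast
    rw [ZMod.natCast_zmod_val, mul_assoc, ← ZMod.coe_unitOfCoprime p hcop, mul_comm _ (u : ZMod q),
      Units.inv_mul_cancel_left]
    ring
  rw [ZMod.natCast_eq_natCast_iff' _ _ q, Nat.mod_eq_of_lt hy] at hcast
  exact hcast

def overtwistLabel (p q r x : ℕ) : ℕ :=
  if x % q < r + p then x % q + 1 else q + r + p - x % q

theorem overtwistLabel_surjOn (p q r : ℕ) :
    Set.SurjOn (overtwistLabel p q r) Set.univ (Set.Icc 1 q) := by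
  rintro j ⟨hj1, hjq⟩
  rcases le_or_gt j (r + p) with h | h
  · refine ⟨j - 1, trivial, ?_⟩
    simp only [overtwistLabel, Nat.mod_eq_of_lt (show j - 1 < q by omega)]
    rw [if_pos (by omega)]; omega
  · refine ⟨q + r + p - j, trivial, ?_⟩
    simp only [overtwistLabel, Nat.mod_eq_of_lt (show q + r + p - j < q by omega)]
    rw [if_neg (by omega)]; omega

theorem overtwistLabel_semiconj {p q r : ℕ} (hrq : r + 2 * p ≤ q) (hpq : p < q) {σ : ℕ → ℕ}
    (h1 : ∀ i, 1 ≤ i → i ≤ r → σ i = i + p)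
    (h2 : ∀ i, 1 ≤ i → i ≤ p → σ (r + i) = q - i + 1)
    (h3 : ∀ i, 1 ≤ i → i ≤ p → σ (r + p + i) = p - i + 1)
    (h4 : ∀ i, 1 ≤ i → i ≤ q - 2 * p - r → σ (r + 2 * p + i) = r + p + i) :
    Function.Semiconj (overtwistLabel p q r) (· + p) σ := by
  intro x
  have hx : x % q < q := Nat.mod_lt _ (by omega)
  simp only [overtwistLabel, Nat.add_mod x p q, Nat.mod_eq_of_lt hpq]
  generalize x % q = y at hx ⊢
  rcases lt_or_ge y r with hA | hyr
  · rw [Nat.mod_eq_of_lt (by omega), if_pos (by omega), if_pos (by omega),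
      h1 (y + 1) (by omega) (by omega)]
    omega
  rcases lt_or_ge y (r + p) with hB | hyrp
  · rw [Nat.mod_eq_of_lt (by omega), if_neg (by omega), if_pos hB,
      show y + 1 = r + (y - r + 1) by omega, h2 _ (by omega) (by omega)]
    omega
  rcases lt_or_ge (y + p) q with hC | hD
  · rw [Nat.mod_eq_of_lt hC, if_neg (by omega), if_neg (by omega),
      show q + r + p - y = r + 2 * p + (q - p - y) by omega, h4 _ (by omega) (by omega)]
    omega
  · rw [Nat.mod_eq_sub_mod hD, Nat.mod_eq_of_lt (by omega), if_pos (by omega), if_neg (by omega),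
      show q + r + p - y = r + p + (q - y) by omega, h3 _ (by omega) (by omega)]
    omega

theorem overtwist_sigma_is_cyclic_general
    (p q r : ℕ) (h2p : 2 * p < q)
    (hr : r ≤ q - 2 * p) (hcop : Nat.gcd p q = 1)
    (σ : ℕ → ℕ)
    (h1 : ∀ i, 1 ≤ i → i ≤ r → σ i = i + p)
    (h2 : ∀ i, 1 ≤ i → i ≤ p → σ (r + i) = q - i + 1)
    (h3 : ∀ i, 1 ≤ i → i ≤ p → σ (r + p + i) = p - i + 1)
    (h4 : ∀ i, 1 ≤ i → i ≤ q - 2 * p - r → σ (r + 2 * p + i) = r + p + i) :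
    ∀ i ∈ Set.Icc 1 q, ∀ j ∈ Set.Icc 1 q, ∃ n : ℕ, σ^[n] i = j := by
  have hsemi := overtwistLabel_semiconj (by omega) (by omega) h1 h2 h3 h4
  intro i hi j hj
  have hsurj := overtwistLabel_surjOn p q r
  obtain ⟨x, -, rfl⟩ := hsurj hi
  obtain ⟨y, -, rfl⟩ := hsurj hj
  obtain ⟨n, hn⟩ := Nat.exists_add_mul_mod_eq hcop x (Nat.mod_lt y (by omega))
  refine ⟨n, ?_⟩
  rw [← (hsemi.iterate_right n).eq, add_right_iterate, smul_eq_mul]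
  simp only [overtwistLabel, hn]

/-- The permutation `σ` of the over-twist pattern `Γ_{r,p/q}` is
cyclic: it acts transitively on `{1,…,q}`. -/
theorem overtwist_sigma_is_cyclic
    (p q r : ℕ) (hp : 0 < p) (hq : 0 < q) (h2p : 2 * p < q)
    (hr : r ≤ q - 2 * p) (hcop : Nat.gcd p q = 1)
    (σ : ℕ → ℕ)
    (h1 : ∀ i, 1 ≤ i → i ≤ r → σ i = i + p)
    (h2 : ∀ i, 1 ≤ i → i ≤ p → σ (r + i) = q - i + 1)
    (h3 : ∀ i, 1 ≤ i → i ≤ p → σ (r + p + i) = p - i + 1)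
    (h4 : ∀ i, 1 ≤ i → i ≤ q - 2 * p - r → σ (r + 2 * p + i) = r + p + i) :
    ∀ i ∈ Set.Icc 1 q, ∀ j ∈ Set.Icc 1 q, ∃ n : ℕ, σ^[n] i = j :=
  overtwist_sigma_is_cyclic_general p q r h2p hr hcop σ h1 h2 h3 h4
end

section
/- Let p, q be coprime positive integers with q > 2p, let 0 ≤ r ≤ q − 2p, and let σ be the permutation of {1,...,q} given by the over-twist pattern Γ_{r,p/q} (σ(i) = i+p for i ≤ r; σ(r+i) = q−i+1 for 1 ≤ i ≤ p; σ(r+p+i) = p−i+1 for 1 ≤ i ≤ p; σ(r+2p+i) = r+p+i for 1 ≤ i ≤ q−2p−r). The number of indices i ∈ {1,...,q} such that (σ(i) − i) and (σ(σ(i)) − σ(i)) have opposite signs equals 2p. Hence the over-rotation number of the pattern is p/q. -/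
/-- For the permutation `σ` of the over-twist pattern `Γ_{r,p/q}`,
the number of indices `i ∈ {1,…,q}` such that `σ i - i` and `σ (σ i) - σ i`
have opposite signs equals `2p`, so the over-rotation number is `p/q`. -/
theorem overtwist_sigma_rotation_number
    (p q r : ℕ) (hp : 0 < p) (hq : 0 < q) (h2p : 2 * p < q)
    (hr : r ≤ q - 2 * p) (hcop : Nat.gcd p q = 1)
    (σ : ℕ → ℕ)
    (h1 : ∀ i, 1 ≤ i → i ≤ r → σ i = i + p)
    (h2 : ∀ i, 1 ≤ i → i ≤ p → σ (r + i) = q - i + 1)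
    (h3 : ∀ i, 1 ≤ i → i ≤ p → σ (r + p + i) = p - i + 1)
    (h4 : ∀ i, 1 ≤ i → i ≤ q - 2 * p - r → σ (r + 2 * p + i) = r + p + i) :
    {i | i ∈ Set.Icc 1 q ∧
        ((σ i : ℤ) - (i : ℤ)) * ((σ (σ i) : ℤ) - (σ i : ℤ)) < 0}.ncard = 2 * p ∧
    ({i | i ∈ Set.Icc 1 q ∧
        ((σ i : ℤ) - (i : ℤ)) * ((σ (σ i) : ℤ) - (σ i : ℤ)) < 0}.ncard : ℚ) / (2 * q)
      = (p : ℚ) / q := by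
  have hrq : r + 2 * p ≤ q := by omega
  -- σ increases on [1, r+p]
  have spos : ∀ j, 1 ≤ j → j ≤ r + p → j < σ j := by
    intro j hj1 hj2
    by_cases hjr : j ≤ r
    · rw [h1 j hj1 hjr]; omega
    · push_neg at hjr
      have hv := h2 (j - r) (by omega) (by omega)
      have hsi : σ j = q - (j - r) + 1 := by rw [← hv]; congr 1; omega
      omega
  -- σ decreases on [r+p+1, q]
  have sneg : ∀ j, r + p + 1 ≤ j → j ≤ q → σ j < j := by
    intro j hj1 hj2
    by_cases hjc : j ≤ r + 2 * p
    · have hv := h3 (j - r - p) (by omega) (by omega)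
      have hsi : σ j = p - (j - r - p) + 1 := by rw [← hv]; congr 1; omega
      omega
    · have hv := h4 (j - r - 2 * p) (by omega) (by omega)
      have hsi : σ j = r + p + (j - r - 2 * p) := by rw [← hv]; congr 1; omega
      omega
  have key : {i | i ∈ Set.Icc 1 q ∧
      ((σ i : ℤ) - (i : ℤ)) * ((σ (σ i) : ℤ) - (σ i : ℤ)) < 0}
      = Set.Icc (r + 1) (r + 2 * p) := by
    ext i
    simp only [Set.mem_setOf_eq, Set.mem_Icc]
    constructor
    · rintro ⟨⟨hi1, hi2⟩, hlt⟩
      constructor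
      · by_contra hc
        push_neg at hc
        have hsi : σ i = i + p := h1 i hi1 (by omega)
        have e1 : i < σ i := by omega
        have e2 : σ i < σ (σ i) := spos (σ i) (by omega) (by omega)
        have E1 : (0 : ℤ) < (σ i : ℤ) - i := by omega
        have E2 : (0 : ℤ) < (σ (σ i) : ℤ) - σ i := by omega
        nlinarith
      · by_contra hc
        push_neg at hc
        have hv := h4 (i - r - 2 * p) (by omega) (by omega)
        have hsi : σ i = r + p + (i - r - 2 * p) := by rw [← hv]; congr 1; omega
        have e1 : σ i < i := sneg i (by omega) hi2
        have e2 : σ (σ i) < σ i := sneg (σ i) (by omega) (by omega)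
        have E1 : (σ i : ℤ) - i < 0 := by omega
        have E2 : (σ (σ i) : ℤ) - σ i < 0 := by omega
        nlinarith
    · rintro ⟨hi1, hi2⟩
      refine ⟨⟨by omega, by omega⟩, ?_⟩
      by_cases hb : i ≤ r + p
      · have hv := h2 (i - r) (by omega) (by omega)
        have hsi : σ i = q - (i - r) + 1 := by rw [← hv]; congr 1; omega
        have e1 : i < σ i := spos i (by omega) hb
        have e2 : σ (σ i) < σ i := sneg (σ i) (by omega) (by omega)
        have E1 : (0 : ℤ) < (σ i : ℤ) - i := by omega
        have E2 : (σ (σ i) : ℤ) - σ i < 0 := by omega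
        exact mul_neg_of_pos_of_neg E1 E2
      · have hv := h3 (i - r - p) (by omega) (by omega)
        have hsi : σ i = p - (i - r - p) + 1 := by rw [← hv]; congr 1; omega
        have e1 : σ i < i := sneg i (by omega) (by omega)
        have e2 : σ i < σ (σ i) := spos (σ i) (by omega) (by omega)
        have E1 : (σ i : ℤ) - i < 0 := by omega
        have E2 : (0 : ℤ) < (σ (σ i) : ℤ) - σ i := by omega
        exact mul_neg_of_neg_of_pos E1 E2
  have hcard : {i | i ∈ Set.Icc 1 q ∧
      ((σ i : ℤ) - (i : ℤ)) * ((σ (σ i) : ℤ) - (σ i : ℤ)) < 0}.ncard = 2 * p := by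
    rw [key, ← Finset.coe_Icc, Set.ncard_coe_finset, Nat.card_Icc]
    omega
  refine ⟨hcard, ?_⟩
  rw [hcard]
  have hq0 : (q : ℚ) ≠ 0 := Nat.cast_ne_zero.mpr hq.ne'
  push_cast
  field_simp
end

section
/- Let p, q be coprime positive integers with q > 2p, and let σ be the permutation of {1,...,q} given by the over-twist pattern Γ_{r,p/q}. If 0 < r < q − 2p, then the map i ↦ σ(i) on {1,...,q} changes monotonicity direction exactly twice (i.e., {1,...,q} decomposes into exactly 3 maximal intervals on which σ is monotone), so the pattern is bimodal. If r = 0 or r = q − 2p, then σ changes direction exactly once, so the pattern is unimodal. -/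
/-!
On `{1, …, q}` the over-twist permutation is piecewise affine: it rises on `[1, r]`, falls on
`[r + 1, r + 2p]` (across both decreasing blocks, since `σ (r + p) = q - p + 1 > p = σ (r + p + 1)`),
and rises again on `[r + 2p, q]`. So the direction changes at `r + 1` (when the first rising run
`[1, r]` is nonempty) and at `r + 2p` (when the last one is nonempty); both happen for
`0 < r < q - 2p`, exactly one for `r = 0` or `r = q - 2p`.
-/

def directionChanges (σ : ℕ → ℕ) (q : ℕ) : Set ℕ :=
  {i | 2 ≤ i ∧ i ≤ q - 1 ∧ ((σ i : ℤ) - (σ (i - 1) : ℤ)) * ((σ (i + 1) : ℤ) - (σ i : ℤ)) < 0}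

theorem directionChanges_congr {σ τ : ℕ → ℕ} {q : ℕ} (h : ∀ i, 1 ≤ i → i ≤ q → σ i = τ i) :
    directionChanges σ q = directionChanges τ q := by
  ext i
  simp only [directionChanges, Set.mem_ofPred_eq]
  refine and_congr_right fun hi => and_congr_right fun hiq => ?_
  rw [h (i - 1) (by omega) (by omega), h i (by omega) (by omega), h (i + 1) (by omega) (by omega)]

theorem natCast_sub_mul_sub_neg_iff {a b c : ℕ} (hab : a ≠ b) (hbc : b ≠ c) :
    ((b : ℤ) - a) * ((c : ℤ) - b) < 0 ↔ (a < b ↔ ¬ b < c) := by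
  rw [mul_neg_iff]
  omega

/-- The over-twist pattern `Γ_{r,p/q}` in closed form on `{1, …, q}`. -/
def overtwist (p q r i : ℕ) : ℕ :=
  if i ≤ r then i + p
  else if i ≤ r + p then q + r + 1 - i
  else if i ≤ r + 2 * p then r + 2 * p + 1 - i
  else i - p

section overtwist

variable {p q r : ℕ}

theorem eq_overtwist {σ : ℕ → ℕ}
    (h1 : ∀ i, 1 ≤ i → i ≤ r → σ i = i + p)
    (h2 : ∀ i, 1 ≤ i → i ≤ p → σ (r + i) = q - i + 1)
    (h3 : ∀ i, 1 ≤ i → i ≤ p → σ (r + p + i) = p - i + 1)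
    (h4 : ∀ i, 1 ≤ i → i ≤ q - 2 * p - r → σ (r + 2 * p + i) = r + p + i)
    {i : ℕ} (hi : 1 ≤ i) (hiq : i ≤ q) :
    σ i = overtwist p q r i := by
  unfold overtwist
  split_ifs with hr
  · exact h1 i hi hr
  · have := h2 (i - r) (by omega) (by omega)
    rw [Nat.add_sub_cancel' (by omega)] at this
    omega
  · have := h3 (i - (r + p)) (by omega) (by omega)
    rw [Nat.add_sub_cancel' (by omega)] at this
    omega
  · have := h4 (i - (r + 2 * p)) (by omega) (by omega)
    rw [Nat.add_sub_cancel' (by omega)] at this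
    omega

variable (hp : 0 < p) (hr : r + 2 * p ≤ q)
include hp hr

theorem overtwist_ne_succ (i : ℕ) :
    overtwist p q r i ≠ overtwist p q r (i + 1) := by
  unfold overtwist
  split_ifs <;> omega

theorem overtwist_lt_succ_iff (i : ℕ) :
    overtwist p q r i < overtwist p q r (i + 1) ↔ i ≤ r ∨ r + 2 * p ≤ i := by
  unfold overtwist
  split_ifs <;> omega

theorem directionChanges_overtwist :
    directionChanges (overtwist p q r) q =
      {i | (i = r + 1 ∧ 0 < r) ∨ (i = r + 2 * p ∧ r + 2 * p < q)} := by
  ext i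
  simp only [directionChanges, Set.mem_ofPred_eq]
  by_cases hi : 2 ≤ i ∧ i ≤ q - 1
  · have hpred : i - 1 + 1 = i := by omega
    have hne := overtwist_ne_succ hp hr (i - 1)
    have hlt := overtwist_lt_succ_iff hp hr (i - 1)
    rw [hpred] at hne hlt
    rw [natCast_sub_mul_sub_neg_iff hne (overtwist_ne_succ hp hr i), hlt,
      overtwist_lt_succ_iff hp hr i]
    omega
  · omega

end overtwist

theorem overtwist_sigma_modality_general
    (p q r : ℕ) (hp : 0 < p) (h2p : 2 * p < q)
    (hr : r ≤ q - 2 * p)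
    (σ : ℕ → ℕ)
    (h1 : ∀ i, 1 ≤ i → i ≤ r → σ i = i + p)
    (h2 : ∀ i, 1 ≤ i → i ≤ p → σ (r + i) = q - i + 1)
    (h3 : ∀ i, 1 ≤ i → i ≤ p → σ (r + p + i) = p - i + 1)
    (h4 : ∀ i, 1 ≤ i → i ≤ q - 2 * p - r → σ (r + 2 * p + i) = r + p + i) :
    (0 < r ∧ r < q - 2 * p →
      {i | 2 ≤ i ∧ i ≤ q - 1 ∧
        ((σ i : ℤ) - (σ (i - 1) : ℤ)) * ((σ (i + 1) : ℤ) - (σ i : ℤ)) < 0}.ncard = 2) ∧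
    (r = 0 ∨ r = q - 2 * p →
      {i | 2 ≤ i ∧ i ≤ q - 1 ∧
        ((σ i : ℤ) - (σ (i - 1) : ℤ)) * ((σ (i + 1) : ℤ) - (σ i : ℤ)) < 0}.ncard = 1) := by
  change (_ → (directionChanges σ q).ncard = 2) ∧ (_ → (directionChanges σ q).ncard = 1)
  rw [directionChanges_congr fun i hi hiq => eq_overtwist h1 h2 h3 h4 hi hiq,
    directionChanges_overtwist hp (by omega)]
  refine ⟨fun ⟨hr0, hrq⟩ => ?_, fun hr' => ?_⟩
  · have : {i | (i = r + 1 ∧ 0 < r) ∨ (i = r + 2 * p ∧ r + 2 * p < q)} = {r + 1, r + 2 * p} := by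
      ext i
      simp only [Set.mem_ofPred_eq, Set.mem_insert_iff, Set.mem_singleton_iff]
      omega
    rw [this, Set.ncard_pair (by omega)]
  · obtain hr0 | hrq := hr'
    · have : {i | (i = r + 1 ∧ 0 < r) ∨ (i = r + 2 * p ∧ r + 2 * p < q)} = {r + 2 * p} := by
        ext i
        simp only [Set.mem_ofPred_eq, Set.mem_singleton_iff]
        omega
      rw [this, Set.ncard_singleton]
    · have : {i | (i = r + 1 ∧ 0 < r) ∨ (i = r + 2 * p ∧ r + 2 * p < q)} = {r + 1} := by
        ext i
        simp only [Set.mem_ofPred_eq, Set.mem_singleton_iff]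
        omega
      rw [this, Set.ncard_singleton]

/-- The over-twist pattern `Γ_{r,p/q}` is bimodal (two direction
changes of `i ↦ σ i`) when `0 < r < q - 2p`, and unimodal (one direction
change) when `r = 0` or `r = q - 2p`. -/
theorem overtwist_sigma_modality
    (p q r : ℕ) (hp : 0 < p) (hq : 0 < q) (h2p : 2 * p < q)
    (hr : r ≤ q - 2 * p) (hcop : Nat.gcd p q = 1)
    (σ : ℕ → ℕ)
    (h1 : ∀ i, 1 ≤ i → i ≤ r → σ i = i + p)
    (h2 : ∀ i, 1 ≤ i → i ≤ p → σ (r + i) = q - i + 1)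
    (h3 : ∀ i, 1 ≤ i → i ≤ p → σ (r + p + i) = p - i + 1)
    (h4 : ∀ i, 1 ≤ i → i ≤ q - 2 * p - r → σ (r + 2 * p + i) = r + p + i) :
    (0 < r ∧ r < q - 2 * p →
      {i | 2 ≤ i ∧ i ≤ q - 1 ∧
        ((σ i : ℤ) - (σ (i - 1) : ℤ)) * ((σ (i + 1) : ℤ) - (σ i : ℤ)) < 0}.ncard = 2) ∧
    (r = 0 ∨ r = q - 2 * p →
      {i | 2 ≤ i ∧ i ≤ q - 1 ∧
        ((σ i : ℤ) - (σ (i - 1) : ℤ)) * ((σ (i + 1) : ℤ) - (σ i : ℤ)) < 0}.ncard = 1) :=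
  overtwist_sigma_modality_general p q r hp h2p hr σ h1 h2 h3 h4
end

section
/- Let P = {x_1 < x_2 < ... < x_q} ⊂ [0,1] be a cycle of a map f (i.e., f permutes P cyclically), and suppose P can be partitioned into n consecutive blocks K_1 < K_2 < ... < K_n such that on each block K_i the restriction f|_{K_i} is monotone and maps consecutive points of K_i to consecutive points of f(K_i), with exactly k of the blocks on which f is decreasing. Then there exists an (n,k)-interval exchange transformation T : [0,1] → [0,1] and a periodic orbit Q of T such that f|_P is conjugate to T|_Q via an order-preserving bijection. -/
/-- An `(n,k)`-interval exchange transformation of `[0,1]`: a map that is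
piecewise affine with slope `±1` on `n` subintervals determined by a partition
`0 = z₀ < z₁ < … < zₙ = 1`, exactly `k` of which carry slope `-1`. -/
def IsIET (n k : ℕ) (T : ℝ → ℝ) : Prop :=
  ∃ (z : Fin (n + 1) → ℝ) (s : Fin n → Bool),
    StrictMono z ∧ z 0 = 0 ∧ z (Fin.last n) = 1 ∧
    Set.MapsTo T (Set.Ico 0 1) (Set.Icc 0 1) ∧
    (Finset.univ.filter fun i : Fin n => s i = true).card = k ∧
    ∀ i : Fin n, ∃ c : ℝ, ∀ y ∈ Set.Ico (z i.castSucc) (z i.succ),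
      T y = (if s i then -y else y) + c

/-!
Split `[0,1]` into `q` cells of width `1/q`, the `i`-th one centred at `(2i-1)/(2q)`, and group
the cells into the `n` blocks `e b < i ≤ e (b+1)`. On a block, `σ` moves indices by a translation
(`d b = false`) or a reflection (`d b = true`) of `ℕ`, because consecutive indices go to consecutive
indices. The same translation or reflection of `ℝ`, rescaled by `1/q`, maps every cell of the block
onto the cell of its image under `σ`; these pieces form an `(n,k)`-IET sending the centre of cell
`i` to the centre of cell `σ i`.
-/

open Finset

section Blocks

variable {α : Type*} [LinearOrder α] {n : ℕ} {z : ℕ → α}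

theorem exists_lt_mem_Ico_succ {y : α} (hy : y ∈ Set.Ico (z 0) (z n)) :
    ∃ b < n, y ∈ Set.Ico (z b) (z (b + 1)) := by
  induction n with
  | zero => exact absurd hy.2 (not_lt.2 hy.1)
  | succ m ih =>
    by_cases hym : y < z m
    · obtain ⟨b, hb, hyb⟩ := ih ⟨hy.1, hym⟩
      exact ⟨b, by omega, hyb⟩
    · exact ⟨m, m.lt_succ_self, not_lt.1 hym, hy.2⟩

theorem eq_of_mem_Ico_succ (hz : MonotoneOn z (Set.Iic n)) {b b' : ℕ} (hb : b < n) (hb' : b' < n)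
    {y : α} (hyb : y ∈ Set.Ico (z b) (z (b + 1))) (hyb' : y ∈ Set.Ico (z b') (z (b' + 1))) :
    b = b' := by
  have key : ∀ {i j}, i < j → j < n → y ∈ Set.Ico (z i) (z (i + 1)) →
      y ∈ Set.Ico (z j) (z (j + 1)) → False := fun hij hj hyi hyj =>
    (hyi.2.trans_le (hz (Set.mem_Iic.2 (by omega)) (Set.mem_Iic.2 hj.le) hij)).not_ge hyj.1
  rcases lt_trichotomy b b' with h | h | h
  · exact (key h hb' hyb hyb').elim
  · exact h
  · exact (key h hb hyb' hyb).elim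

theorem exists_eqOn_Ico_succ {β : Type*} (hz : MonotoneOn z (Set.Iic n)) (g : ℕ → α → β) :
    ∃ T : α → β, ∀ b < n, Set.EqOn T (g b) (Set.Ico (z b) (z (b + 1))) := by
  classical
  refine ⟨fun y => if h : ∃ b < n, y ∈ Set.Ico (z b) (z (b + 1)) then g h.choose y else g 0 y,
    fun b hb y hyb => ?_⟩
  have h : ∃ b < n, y ∈ Set.Ico (z b) (z (b + 1)) := ⟨b, hb, hyb⟩
  simp only [dif_pos h, eq_of_mem_Ico_succ hz h.choose_spec.1 hb h.choose_spec.2 hyb]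

end Blocks

theorem isIET_of_blocks {n : ℕ} {z : ℕ → ℝ} (hz : StrictMonoOn z (Set.Iic n))
    (hz0 : z 0 = 0) (hzn : z n = 1) {s : ℕ → Bool} {c : ℕ → ℝ} {T : ℝ → ℝ}
    (hT : ∀ b < n, ∀ y ∈ Set.Ico (z b) (z (b + 1)), T y = (if s b then -y else y) + c b)
    (hmaps : ∀ b < n, Set.MapsTo T (Set.Ico (z b) (z (b + 1))) (Set.Icc 0 1)) :
    IsIET n #{b ∈ range n | s b} T := by
  refine ⟨fun i => z i, fun i => s i, fun i j hij => hz i.is_le j.is_le hij, hz0, hzn,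
    fun y hy => ?_, ?_, fun i => ⟨c i, fun y hy => hT i i.isLt y (by simpa using hy)⟩⟩
  · obtain ⟨b, hb, hyb⟩ := exists_lt_mem_Ico_succ (z := z) (n := n) (by rwa [hz0, hzn])
    exact hmaps b hb hyb
  · simp only [Finset.card_filter]
    exact Fin.sum_univ_eq_sum_range (fun b => if s b = true then 1 else 0) n

theorem eq_add_mul_of_succ_eq_add {R : Type*} [CommRing R] {u : ℕ → R} {δ : R} {a m : ℕ}
    (h : ∀ j, a ≤ j → j < m → u (j + 1) = u j + δ) {j : ℕ} (haj : a ≤ j) (hjm : j ≤ m) :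
    u j = u a + ((j : R) - a) * δ := by
  induction j, haj using Nat.le_induction with
  | base => ring
  | succ j haj ih =>
    rw [h j haj hjm, ih (by omega)]
    push_cast
    ring

def boolSign (s : Bool) : ℝ := if s then -1 else 1

theorem boolSign_mul (s : Bool) (y : ℝ) : boolSign s * y = if s then -y else y := by
  cases s <;> simp [boolSign]

theorem abs_boolSign (s : Bool) : |boolSign s| = 1 := by
  cases s <;> simp [boolSign]

section Cells

variable {q : ℕ}

noncomputable def cellMid (q i : ℕ) : ℝ := (2 * i - 1) / (2 * q)

theorem cellMid_sub_cellMid (i j : ℕ) : cellMid q i - cellMid q j = ((i : ℝ) - j) / q := by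
  simp only [cellMid]
  ring

theorem cellMid_strictMono (hq : 0 < q) : StrictMono (cellMid q) := fun i j hij => by
  have : (0 : ℝ) < ((j : ℝ) - i) / q := div_pos (by simpa using hij) (by positivity)
  linarith [cellMid_sub_cellMid (q := q) j i]

theorem cellMid_add_mem_Icc (hq : 0 < q) {i : ℕ} (hi : i ∈ Set.Icc 1 q) {t : ℝ}
    (ht : |t| ≤ 1 / (2 * q)) : cellMid q i + t ∈ Set.Icc 0 1 := by
  have hq' : (0 : ℝ) < q := by exact_mod_cast hq
  have h1 : (1 : ℝ) ≤ i := by exact_mod_cast hi.1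
  have h2 : (i : ℝ) ≤ q := by exact_mod_cast hi.2
  have hmid : cellMid q i = i / q - 1 / (2 * q) := by
    rw [cellMid]; field_simp
  obtain ⟨ht1, ht2⟩ := abs_le.1 ht
  constructor
  · have : 1 / q ≤ (i : ℝ) / q := div_le_div_of_nonneg_right h1 hq'.le
    have : 1 / (2 * q) = (1 : ℝ) / q / 2 := by field_simp
    linarith
  · have : (i : ℝ) / q ≤ 1 := (div_le_one hq').2 h2
    linarith

theorem cellMid_mem_Ico (hq : 0 < q) {m m' i : ℕ} (hi : i ∈ Set.Ioc m m') :
    cellMid q i ∈ Set.Ico ((m : ℝ) / q) (m' / q) := by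
  have hq' : (0 : ℝ) < q := by exact_mod_cast hq
  have h1 : (m : ℝ) + 1 ≤ i := by exact_mod_cast hi.1
  have h2 : (i : ℝ) ≤ m' := by exact_mod_cast hi.2
  rw [cellMid, Set.mem_Ico, div_le_div_iff₀ hq' (by positivity),
    div_lt_div_iff₀ (by positivity) hq']
  constructor <;> nlinarith

noncomputable def cellIndex (q : ℕ) (y : ℝ) : ℕ := ⌊q * y⌋₊ + 1

theorem cellIndex_mem_Ioc (hq : 0 < q) {m m' : ℕ} {y : ℝ}
    (hy : y ∈ Set.Ico ((m : ℝ) / q) (m' / q)) : cellIndex q y ∈ Set.Ioc m m' := by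
  have hq' : (0 : ℝ) < q := by exact_mod_cast hq
  rw [Set.mem_Ico, div_le_iff₀ hq', lt_div_iff₀ hq', mul_comm y] at hy
  have hfl := Nat.le_floor hy.1
  have hlt := (Nat.floor_lt ((Nat.cast_nonneg m).trans hy.1)).2 hy.2
  exact ⟨by unfold cellIndex; omega, by unfold cellIndex; omega⟩

theorem abs_sub_cellMid_cellIndex_le (hq : 0 < q) {y : ℝ} (hy : 0 ≤ y) :
    |y - cellMid q (cellIndex q y)| ≤ 1 / (2 * q) := by
  have hq' : (0 : ℝ) < q := by exact_mod_cast hq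
  have hlo := Nat.floor_le (mul_nonneg hq'.le hy)
  have hhi := Nat.lt_floor_add_one ((q : ℝ) * y)
  have hmid : y - cellMid q (cellIndex q y) = (q * y - ⌊q * y⌋₊ - 1 / 2) / q := by
    rw [cellMid, cellIndex]; push_cast; field_simp; ring
  have hfrac : |(q : ℝ) * y - ⌊q * y⌋₊ - 1 / 2| ≤ 1 / 2 := abs_le.2 ⟨by linarith, by linarith⟩
  rw [hmid, abs_div, abs_of_pos hq']
  calc _ ≤ 1 / 2 / (q : ℝ) := div_le_div_of_nonneg_right hfrac hq'.le
    _ = 1 / (2 * q) := by rw [div_div]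

end Cells

theorem cellMid_comp_eq_of_step {q m m' : ℕ} {σ : ℕ → ℕ} {s : Bool}
    (hstep : ∀ j, m < j → j + 1 ≤ m' →
      if s then (σ j : ℤ) = (σ (j + 1) : ℤ) + 1 else (σ (j + 1) : ℤ) = (σ j : ℤ) + 1)
    {j : ℕ} (hj : j ∈ Set.Ioc m m') :
    cellMid q (σ j) = cellMid q (σ (m + 1)) + boolSign s * (cellMid q j - cellMid q (m + 1)) := by
  have hσ : (σ j : ℝ) = σ (m + 1) + ((j : ℝ) - (m + 1 : ℕ)) * boolSign s := by
    refine eq_add_mul_of_succ_eq_add (u := fun i => (σ i : ℝ)) (fun i hi him => ?_) hj.1 hj.2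
    have := hstep i (by omega) (by omega)
    unfold boolSign
    split_ifs at this ⊢ <;>
    · have hR := congrArg (Int.cast : ℤ → ℝ) this
      push_cast at hR
      linarith
  have h1 := cellMid_sub_cellMid (q := q) (σ j) (σ (m + 1))
  have h2 := cellMid_sub_cellMid (q := q) j (m + 1)
  rw [hσ] at h1
  linear_combination h1 - boolSign s * h2

theorem cycle_blocks_conjugate_to_IET_general
    (q n k : ℕ) (hq : 0 < q)
    (σ : ℕ → ℕ)
    (hσ : Set.BijOn σ (Set.Icc 1 q) (Set.Icc 1 q))
    (e : ℕ → ℕ) (he : ∀ i j, i < j → j ≤ n → e i < e j)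
    (he0 : e 0 = 0) (hen : e n = q)
    (d : ℕ → Bool)
    (hk : ((Finset.range n).filter fun b => d b = true).card = k)
    (hstep : ∀ b < n, ∀ j, e b < j → j + 1 ≤ e (b + 1) →
      if d b then (σ j : ℤ) = (σ (j + 1) : ℤ) + 1
      else (σ (j + 1) : ℤ) = (σ j : ℤ) + 1) :
    ∃ T : ℝ → ℝ, IsIET n k T ∧
      ∃ y : ℕ → ℝ,
        (∀ i j, 1 ≤ i → i < j → j ≤ q → y i < y j) ∧
        (∀ i ∈ Set.Icc 1 q, y i ∈ Set.Icc (0 : ℝ) 1) ∧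
        (∀ i ∈ Set.Icc 1 q, T (y i) = y (σ i)) := by
  have hq' : (0 : ℝ) < q := by exact_mod_cast hq
  have he' : StrictMonoOn e (Set.Iic n) := fun i _ j hj hij => he i j hij hj
  have hblock : ∀ b < n, Set.Ioc (e b) (e (b + 1)) ⊆ Set.Icc 1 q := fun b hb j hj =>
    ⟨Nat.one_le_of_lt hj.1,
      hj.2.trans (hen ▸ he'.monotoneOn (Set.mem_Iic.2 hb) (Set.mem_Iic.2 le_rfl) hb)⟩
  set z : ℕ → ℝ := fun b => e b / q
  have hz : StrictMonoOn z (Set.Iic n) := fun i hi j hj hij =>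
    div_lt_div_of_pos_right (by exact_mod_cast he' hi hj hij) hq'
  -- the affine piece on block `b` sends the midpoint of the first cell `e b + 1` to that of its image
  set c : ℕ → ℝ := fun b => cellMid q (σ (e b + 1)) - boolSign (d b) * cellMid q (e b + 1)
  obtain ⟨T, hT⟩ := exists_eqOn_Ico_succ hz.monotoneOn fun b y => boolSign (d b) * y + c b
  have hTcell : ∀ b < n, ∀ j ∈ Set.Ioc (e b) (e (b + 1)), ∀ y ∈ Set.Ico (z b) (z (b + 1)),
      T y = cellMid q (σ j) + boolSign (d b) * (y - cellMid q j) := by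
    intro b hb j hj y hy
    rw [hT b hb hy, cellMid_comp_eq_of_step (hstep b hb) hj]
    ring
  refine ⟨T, hk ▸ isIET_of_blocks hz (by simp [z, he0]) (by simp [z, hen, hq'.ne'])
      (c := c) (fun b hb y hy => (hT b hb hy).trans (congrArg (· + c b) (boolSign_mul _ _))) ?_,
    cellMid q, fun i j _ hij _ => cellMid_strictMono hq hij,
    fun i hi => by simpa using cellMid_add_mem_Icc hq hi (t := 0) (by rw [abs_zero]; positivity), ?_⟩
  · intro b hb y hy
    have hj := cellIndex_mem_Ioc hq hy
    rw [hTcell b hb _ hj y hy]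
    refine cellMid_add_mem_Icc hq (hσ.mapsTo (hblock b hb hj)) ?_
    rw [abs_mul, abs_boolSign, one_mul]
    exact abs_sub_cellMid_cellIndex_le hq ((div_nonneg (Nat.cast_nonneg _) hq'.le).trans hy.1)
  · intro i hi
    obtain ⟨b, hb, hib⟩ := exists_lt_mem_Ico_succ (z := e) (n := n) (y := i - 1)
      ⟨by rw [he0]; exact Nat.zero_le _, by rw [hen]; grind⟩
    have hib' : i ∈ Set.Ioc (e b) (e (b + 1)) := ⟨by grind, by grind⟩
    rw [hTcell b hb i hib' _ (cellMid_mem_Ico hq hib'), sub_self, mul_zero, add_zero]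

/-- If a cycle `P = {x_1 < … < x_q} ⊂ [0,1]` of `f` splits into
`n` consecutive blocks on each of which `f` is monotone and maps consecutive
points to consecutive points, with exactly `k` decreasing blocks, then `f|_P`
is conjugate, via an order-preserving bijection, to an `(n,k)`-IET restricted
to one of its periodic orbits. -/
theorem cycle_blocks_conjugate_to_IET
    (q n k : ℕ) (hq : 0 < q)
    (x : ℕ → ℝ)
    (hxmono : ∀ i j, 1 ≤ i → i < j → j ≤ q → x i < x j)
    (hxmem : ∀ i ∈ Set.Icc 1 q, x i ∈ Set.Icc (0 : ℝ) 1)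
    (f : ℝ → ℝ) (σ : ℕ → ℕ)
    (hσ : Set.BijOn σ (Set.Icc 1 q) (Set.Icc 1 q))
    (hfx : ∀ i ∈ Set.Icc 1 q, f (x i) = x (σ i))
    (hcyc : ∀ i ∈ Set.Icc 1 q, ∀ j ∈ Set.Icc 1 q, ∃ m : ℕ, σ^[m] i = j)
    (e : ℕ → ℕ) (he : ∀ i j, i < j → j ≤ n → e i < e j)
    (he0 : e 0 = 0) (hen : e n = q)
    (d : ℕ → Bool)
    (hk : ((Finset.range n).filter fun b => d b = true).card = k)
    (hstep : ∀ b < n, ∀ j, e b < j → j + 1 ≤ e (b + 1) →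
      if d b then (σ j : ℤ) = (σ (j + 1) : ℤ) + 1
      else (σ (j + 1) : ℤ) = (σ j : ℤ) + 1) :
    ∃ T : ℝ → ℝ, IsIET n k T ∧
      ∃ y : ℕ → ℝ,
        (∀ i j, 1 ≤ i → i < j → j ≤ q → y i < y j) ∧
        (∀ i ∈ Set.Icc 1 q, y i ∈ Set.Icc (0 : ℝ) 1) ∧
        (∀ i ∈ Set.Icc 1 q, T (y i) = y (σ i)) :=
  cycle_blocks_conjugate_to_IET_general q n k hq σ hσ e he he0 hen d hk hstep
end

section
/- Let f : [0,1] → [0,1] be continuous, piecewise monotone with m turning points (modality m), having a unique fixed point a with f(x) > x for x < a and f(x) < x for x > a. Then the special set S(f) = { s(x) : x ∈ [0,1] }, where s(x) is the preimage of f(x) (under f) on the same side of a as x that is closest to a, has at most m + 2 connected components. -/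
/-- The special set, as a definition. -/
def SP (f : ℝ → ℝ) (a : ℝ) : Set ℝ :=
  {y ∈ Set.Icc 0 1 | ∀ z ∈ Set.Icc 0 1, f z = f y →
      ((z ≤ a ∧ y ≤ a) ∨ (a ≤ z ∧ a ≤ y)) → |y - a| ≤ |z - a|}

lemma SP_left_intro {f : ℝ → ℝ} {a y : ℝ} (hy : y ∈ Set.Icc (0:ℝ) 1) (hya : y ≤ a)
    (h : ∀ z ∈ Set.Icc (0:ℝ) 1, y < z → z ≤ a → f z ≠ f y) : y ∈ SP f a := by
  refine ⟨hy, fun z hz hfz hside => ?_⟩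
  rcases hside with ⟨hza, _⟩ | ⟨haz, hay⟩
  · rw [abs_of_nonpos (by linarith), abs_of_nonpos (by linarith)]
    by_contra hlt
    push_neg at hlt
    exact h z hz (by linarith) hza hfz
  · have hya' : y = a := le_antisymm hya hay
    simp [hya', sub_self, abs_nonneg]

lemma SP_right_intro {f : ℝ → ℝ} {a y : ℝ} (hy : y ∈ Set.Icc (0:ℝ) 1) (hya : a ≤ y)
    (h : ∀ z ∈ Set.Icc (0:ℝ) 1, a ≤ z → z < y → f z ≠ f y) : y ∈ SP f a := by
  refine ⟨hy, fun z hz hfz hside => ?_⟩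
  rcases hside with ⟨hza, hyle⟩ | ⟨haz, _⟩
  · have hya' : y = a := le_antisymm hyle hya
    simp [hya', sub_self, abs_nonneg]
  · rw [abs_of_nonneg (by linarith), abs_of_nonneg (by linarith)]
    by_contra hlt
    push_neg at hlt
    exact h z hz haz (by linarith) hfz

lemma SP_left_elim {f : ℝ → ℝ} {a y : ℝ} (hy : y ∈ SP f a) (hya : y ≤ a) :
    ∀ z ∈ Set.Icc (0:ℝ) 1, y < z → z ≤ a → f z ≠ f y := by
  intro z hz hyz hza hfz
  have h := hy.2 z hz hfz (Or.inl ⟨hza, hya⟩)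
  rw [abs_of_nonpos (by linarith), abs_of_nonpos (by linarith)] at h
  linarith

lemma SP_right_elim {f : ℝ → ℝ} {a y : ℝ} (hy : y ∈ SP f a) (hya : a ≤ y) :
    ∀ z ∈ Set.Icc (0:ℝ) 1, a ≤ z → z < y → f z ≠ f y := by
  intro z hz hza hzy hfz
  have h := hy.2 z hz hfz (Or.inr ⟨hza, hya⟩)
  rw [abs_of_nonneg (by linarith), abs_of_nonneg (by linarith)] at h
  linarith

/-- Left-of-`a` interval lemma: if `y' ∈ SP` lies in the lap `[c,d]` with
`y' ≤ a`, then any `t ∈ [c, y']` is also in `SP`. -/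
lemma left_interval {f : ℝ → ℝ} (hf : ContinuousOn f (Set.Icc 0 1))
    {a c d : ℝ} (hc0 : 0 ≤ c) (hd1 : d ≤ 1) (ha1 : a ≤ 1)
    (hmono : StrictMonoOn f (Set.Icc c d) ∨ StrictAntiOn f (Set.Icc c d))
    {t y' : ℝ} (hct : c ≤ t) (hty : t ≤ y') (hya : y' ≤ a) (hyd : y' ≤ d)
    (hedge : y' < d ∨ y' = a) (hy'S : y' ∈ SP f a) : t ∈ SP f a := by
  have ht01 : t ∈ Set.Icc (0:ℝ) 1 := ⟨hc0.trans hct, (hty.trans hya).trans ha1⟩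
  refine SP_left_intro ht01 (hty.trans hya) ?_
  intro z hz htz hza hfz
  by_cases hzd : z ≤ d
  · have htm : t ∈ Set.Icc c d := ⟨hct, hty.trans hyd⟩
    have hzm : z ∈ Set.Icc c d := ⟨hct.trans htz.le, hzd⟩
    rcases hmono with hm | hm
    · exact absurd hfz (ne_of_gt (hm htm hzm htz))
    · exact absurd hfz (ne_of_lt (hm htm hzm htz))
  · push_neg at hzd
    have hy'd : y' < d := by
      rcases hedge with h | h
      · exact h
      · -- y' = a, but then z ≤ a = y' ≤ d < z, contradiction
        linarith
    have hkey := SP_left_elim hy'S hya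
    by_cases hfty : f t = f y'
    · exact hkey z hz (lt_of_le_of_lt hyd hzd) hza (by rw [hfz, hfty])
    · have hty' : t < y' := lt_of_le_of_ne hty (fun h => hfty (by rw [h]))
      have htm : t ∈ Set.Icc c d := ⟨hct, hty.trans hyd⟩
      have hy'm : y' ∈ Set.Icc c d := ⟨hct.trans hty, hyd⟩
      have hdm : d ∈ Set.Icc c d := ⟨(hct.trans hty).trans hyd, le_refl d⟩
      have hsub : Set.Icc d z ⊆ Set.Icc (0:ℝ) 1 :=
        Set.Icc_subset_Icc (hc0.trans ((hct.trans hty).trans hyd)) hz.2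
      rcases hmono with hm | hm
      · have h1 : f t < f y' := hm htm hy'm hty'
        have h2 : f y' < f d := hm hy'm hdm hy'd
        have hiv := intermediate_value_Icc' hzd.le (hf.mono hsub)
        have hmem : f y' ∈ Set.Icc (f z) (f d) := ⟨by rw [hfz]; linarith, h2.le⟩
        obtain ⟨w, hw, hfw⟩ := hiv hmem
        exact hkey w (hsub hw) (lt_of_lt_of_le hy'd hw.1) (hw.2.trans hza) hfw
      · have h1 : f y' < f t := hm htm hy'm hty'
        have h2 : f d < f y' := hm hy'm hdm hy'd
        have hiv := intermediate_value_Icc hzd.le (hf.mono hsub)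
        have hmem : f y' ∈ Set.Icc (f d) (f z) := ⟨h2.le, by rw [hfz]; linarith⟩
        obtain ⟨w, hw, hfw⟩ := hiv hmem
        exact hkey w (hsub hw) (lt_of_lt_of_le hy'd hw.1) (hw.2.trans hza) hfw

/-- Right-of-`a` interval lemma: if `y ∈ SP` lies in the lap `[c,d]` with
`a < y`, `c < y`, then any `t ∈ [y, d]` is also in `SP`. -/
lemma right_interval {f : ℝ → ℝ} (hf : ContinuousOn f (Set.Icc 0 1))
    {a c d : ℝ} (hc0 : 0 ≤ c) (hd1 : d ≤ 1) (ha0 : 0 ≤ a)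
    (hmono : StrictMonoOn f (Set.Icc c d) ∨ StrictAntiOn f (Set.Icc c d))
    {y t : ℝ} (hay : a < y) (hcy : c < y) (hyt : y ≤ t) (htd : t ≤ d)
    (hyS : y ∈ SP f a) : t ∈ SP f a := by
  have ht01 : t ∈ Set.Icc (0:ℝ) 1 := ⟨ha0.trans (hay.le.trans hyt), htd.trans hd1⟩
  refine SP_right_intro ht01 (hay.le.trans hyt) ?_
  intro z hz hza hzt hfz
  by_cases hcz : c ≤ z
  · have htm : t ∈ Set.Icc c d := ⟨hcy.le.trans hyt, htd⟩
    have hzm : z ∈ Set.Icc c d := ⟨hcz, hzt.le.trans htd⟩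
    rcases hmono with hm | hm
    · exact absurd hfz (ne_of_lt (hm hzm htm hzt))
    · exact absurd hfz (ne_of_gt (hm hzm htm hzt))
  · push_neg at hcz
    have hkey := SP_right_elim hyS hay.le
    by_cases hfty : f t = f y
    · exact hkey z hz hza (lt_of_lt_of_le hcz hcy.le) (by rw [hfz, hfty])
    · have hyt' : y < t := lt_of_le_of_ne hyt (fun h => hfty (by rw [h]))
      have hym : y ∈ Set.Icc c d := ⟨hcy.le, hyt.trans htd⟩
      have htm : t ∈ Set.Icc c d := ⟨hcy.le.trans hyt, htd⟩
      have hcm : c ∈ Set.Icc c d := ⟨le_refl c, (hcy.le.trans hyt).trans htd⟩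
      have hsub : Set.Icc z c ⊆ Set.Icc (0:ℝ) 1 :=
        Set.Icc_subset_Icc hz.1 ((hcy.le.trans hyt).trans (htd.trans hd1))
      rcases hmono with hm | hm
      · have h1 : f y < f t := hm hym htm hyt'
        have h2 : f c < f y := hm hcm hym hcy
        have hiv := intermediate_value_Icc' hcz.le (hf.mono hsub)
        have hmem : f y ∈ Set.Icc (f c) (f z) := ⟨h2.le, by rw [hfz]; linarith⟩
        obtain ⟨w, hw, hfw⟩ := hiv hmem
        exact hkey w (hsub hw) (hza.trans hw.1) (lt_of_le_of_lt hw.2 hcy) hfw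
      · have h1 : f t < f y := hm hym htm hyt'
        have h2 : f y < f c := hm hcm hym hcy
        have hiv := intermediate_value_Icc hcz.le (hf.mono hsub)
        have hmem : f y ∈ Set.Icc (f z) (f c) := ⟨by rw [hfz]; linarith, h2.le⟩
        obtain ⟨w, hw, hfw⟩ := hiv hmem
        exact hkey w (hsub hw) (hza.trans hw.1) (lt_of_le_of_lt hw.2 hcy) hfw

/-- For a continuous piecewise-monotone map `f` of `[0,1]` of
modality `m` with a unique fixed point `a` (`f x > x` left of `a`, `f x < x`
right of `a`), the special set `S(f)` — the set of points having no sibling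
strictly closer to `a` on their own side of `a` — has at most `m + 2`
connected components. -/
theorem special_set_components_card_le
    (f : ℝ → ℝ) (hf : ContinuousOn f (Set.Icc 0 1))
    (hmaps : Set.MapsTo f (Set.Icc 0 1) (Set.Icc 0 1))
    (m : ℕ) (c : Fin (m + 2) → ℝ) (hc : StrictMono c)
    (hc0 : c 0 = 0) (hc1 : c (Fin.last (m + 1)) = 1)
    (hlap : ∀ i : Fin (m + 1),
      StrictMonoOn f (Set.Icc (c i.castSucc) (c i.succ)) ∨
      StrictAntiOn f (Set.Icc (c i.castSucc) (c i.succ)))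
    (a : ℝ) (ha : a ∈ Set.Icc 0 1) (hfix : f a = a)
    (hleft : ∀ x ∈ Set.Icc 0 1, x < a → x < f x)
    (hright : ∀ x ∈ Set.Icc 0 1, a < x → f x < x)
    (S : Set ℝ)
    (hS : S = {y ∈ Set.Icc 0 1 | ∀ z ∈ Set.Icc 0 1, f z = f y →
      ((z ≤ a ∧ y ≤ a) ∨ (a ≤ z ∧ a ≤ y)) → |y - a| ≤ |z - a|}) :
    ∃ C : Finset (Set ℝ), C.card ≤ m + 2 ∧
      ∀ y ∈ S, connectedComponentIn S y ∈ C := by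
  classical
  have hS' : S = SP f a := hS
  subst hS'
  obtain ⟨ha0, ha1⟩ := ha
  -- the extended lap endpoints, as a function on ℕ
  set c' : ℕ → ℝ := fun n => c ⟨min n (m+1), by omega⟩ with hc'def
  have hc'eq : ∀ n (h : n ≤ m + 1), c' n = c ⟨n, by omega⟩ := by
    intro n h
    simp only [hc'def]
    congr 1
    exact Fin.ext (by simp [Nat.min_eq_left h])
  have hc'mono : Monotone c' := by
    intro i j hij
    exact hc.monotone (by simp [Fin.le_def]; omega)
  have hc'0 : c' 0 = 0 := by
    rw [hc'eq 0 (by omega), ← hc0]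
    congr 1
  have hc'last : c' (m+1) = 1 := by
    rw [hc'eq (m+1) le_rfl, ← hc1]
    congr 1
  have hc'lap : ∀ i : ℕ, i ≤ m →
      StrictMonoOn f (Set.Icc (c' i) (c' (i+1))) ∨
      StrictAntiOn f (Set.Icc (c' i) (c' (i+1))) := by
    intro i hi
    have h1 : c' i = c (Fin.castSucc ⟨i, by omega⟩) := by
      rw [hc'eq i (by omega)]
      congr 1
    have h2 : c' (i+1) = c (Fin.succ ⟨i, by omega⟩) := by
      rw [hc'eq (i+1) (by omega)]
      congr 1
    rw [h1, h2]
    exact hlap ⟨i, by omega⟩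
  have hc'nonneg : ∀ n, 0 ≤ c' n := fun n => hc'0 ▸ hc'mono (Nat.zero_le n)
  have hc'le1 : ∀ n, n ≤ m + 1 → c' n ≤ 1 := fun n hn => hc'last ▸ hc'mono hn
  -- labels
  set li : ℝ → ℕ := fun y => Nat.findGreatest (fun n => c' n ≤ y) m with hli
  set ri : ℝ → ℕ := fun y => Nat.findGreatest (fun n => c' n < y) m with hri
  set lab : ℝ → ℕ := fun y => if y ≤ a then li y else ri y + 1 with hlab
  have hS01 : SP f a ⊆ Set.Icc (0:ℝ) 1 := fun y hy => hy.1
  -- basic properties of li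
  have hli_le : ∀ y, li y ≤ m := fun y => Nat.findGreatest_le m
  have hri_le : ∀ y, ri y ≤ m := fun y => Nat.findGreatest_le m
  have hli_spec : ∀ y, 0 ≤ y → c' (li y) ≤ y := by
    intro y hy
    exact Nat.findGreatest_spec (P := fun n => c' n ≤ y) (Nat.zero_le m)
      (show c' 0 ≤ y by rw [hc'0]; exact hy)
  have hri_spec : ∀ y, 0 < y → c' (ri y) < y := by
    intro y hy
    exact Nat.findGreatest_spec (P := fun n => c' n < y) (Nat.zero_le m)
      (show c' 0 < y by rw [hc'0]; exact hy)
  have hli_ub : ∀ y, y ≤ 1 → y ≤ c' (li y + 1) ∧ (y < c' (li y + 1) ∨ li y = m) := by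
    intro y hy
    simp only [hli]
    set k := Nat.findGreatest (fun n => c' n ≤ y) m with hk
    by_cases h : k < m
    · have hg := Nat.findGreatest_is_greatest (P := fun n => c' n ≤ y)
        (n := m) (k := k + 1) (by omega) (by omega)
      simp only [not_le] at hg
      exact ⟨hg.le, Or.inl hg⟩
    · have hm' : k = m := by
        have := Nat.findGreatest_le (P := fun n => c' n ≤ y) m
        omega
      refine ⟨?_, Or.inr hm'⟩
      rw [hm', hc'last]; exact hy
  have hri_ub : ∀ y, y ≤ 1 → y ≤ c' (ri y + 1) := by
    intro y hy
    simp only [hri]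
    set k := Nat.findGreatest (fun n => c' n < y) m with hk
    by_cases h : k < m
    · have hg := Nat.findGreatest_is_greatest (P := fun n => c' n < y)
        (n := m) (k := k + 1) (by omega) (by omega)
      simp only [not_lt] at hg
      exact hg
    · have hm' : k = m := by
        have := Nat.findGreatest_le (P := fun n => c' n < y) m
        omega
      rw [hm', hc'last]; exact hy
  -- same label implies same interval in SP
  have hsame : ∀ u v, u ∈ SP f a → v ∈ SP f a → u ≤ v → lab u = lab v →
      Set.Icc u v ⊆ SP f a := by
    intro u v hu hv huv hl t ht
    have hu01 := hS01 hu
    have hv01 := hS01 hv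
    by_cases hva : v ≤ a
    · -- both left of a
      have hua : u ≤ a := huv.trans hva
      have hlv : lab v = li v := if_pos hva
      have hlu : lab u = li u := if_pos hua
      have hiu : li u = li v := by rw [← hlu, hl, hlv]
      have him : li v ≤ m := hli_le v
      have hciu : c' (li v) ≤ u := by
        have := hli_spec u hu01.1
        rwa [hiu] at this
      obtain ⟨hvle, hedge0⟩ := hli_ub v hv01.2
      have hedge : v < c' (li v + 1) ∨ v = a := by
        rcases hedge0 with h | h
        · exact Or.inl h
        · by_cases hlt : v < c' (li v + 1)
          · exact Or.inl hlt
          · have h1 : c' (li v + 1) = 1 := by rw [h]; exact hc'last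
            have h2 : c' (li v + 1) ≤ v := not_lt.mp hlt
            right
            linarith [hv01.2]
      exact left_interval hf (hc'nonneg (li v)) (hc'le1 (li v + 1) (by omega)) ha1
        (hc'lap (li v) him) (hciu.trans ht.1) ht.2 hva hvle hedge hv
    · -- v > a; show u > a too
      push_neg at hva
      have hua : ¬ u ≤ a := by
        intro hua
        have hlu : lab u = li u := if_pos hua
        have hlv : lab v = ri v + 1 := if_neg (not_le.mpr hva)
        have h1 : c' (li u) ≤ u := hli_spec u hu01.1
        have h2 : v ≤ c' (ri v + 1) := hri_ub v hv01.2
        rw [hlu, hlv] at hl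
        rw [hl] at h1
        linarith
      push_neg at hua
      have hlv : lab v = ri v + 1 := if_neg (not_le.mpr hva)
      have hlu : lab u = ri u + 1 := if_neg (not_le.mpr hua)
      have hiv : ri v = ri u := by
        have h := hl
        rw [hlu, hlv] at h
        omega
      have him : ri u ≤ m := hri_le u
      have hciu : c' (ri u) < u := hri_spec u (lt_of_le_of_lt ha0 hua)
      have hvle : v ≤ c' (ri u + 1) := by
        have := hri_ub v hv01.2
        rwa [hiv] at this
      exact right_interval hf (hc'nonneg (ri u)) (hc'le1 (ri u + 1) (by omega)) ha0
        (hc'lap (ri u) him) hua hciu ht.1 (ht.2.trans hvle) hu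
  -- same label implies same connected component
  have hcomp : ∀ u v, u ∈ SP f a → v ∈ SP f a → lab u = lab v →
      connectedComponentIn (SP f a) u = connectedComponentIn (SP f a) v := by
    intro u v hu hv hl
    rcases le_total u v with h | h
    · have hsub := hsame u v hu hv h hl
      have := isPreconnected_Icc.subset_connectedComponentIn
        (Set.left_mem_Icc.mpr h) hsub
      exact (connectedComponentIn_eq (this (Set.right_mem_Icc.mpr h))).symm.symm
    · have hsub := hsame v u hv hu h hl.symm
      have := isPreconnected_Icc.subset_connectedComponentIn
        (Set.left_mem_Icc.mpr h) hsub
      exact (connectedComponentIn_eq (this (Set.right_mem_Icc.mpr h))).symm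
  -- representatives
  set rep : ℕ → ℝ := fun n =>
    if h : ∃ y, y ∈ SP f a ∧ lab y = n then h.choose else a with hrep
  refine ⟨(Finset.range (m+2)).image (fun n => connectedComponentIn (SP f a) (rep n)),
    ?_, ?_⟩
  · exact (Finset.card_image_le).trans (by simp)
  · intro y hy
    have hlt : lab y < m + 2 := by
      simp only [hlab]
      split
      · have := hli_le y; omega
      · have := hri_le y; omega
    refine Finset.mem_image.2 ⟨lab y, Finset.mem_range.2 hlt, ?_⟩
    have hex : ∃ y', y' ∈ SP f a ∧ lab y' = lab y := ⟨y, hy, rfl⟩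
    simp only [hrep, dif_pos hex]
    exact hcomp hex.choose y hex.choose_spec.1 hy hex.choose_spec.2
end

section
/- Let f : [0,1] → [0,1] be continuous with a unique fixed point a, f(x) > x for x < a and f(x) < x for x > a. Let P be a cycle of f of period q > 1 with over-rotation pair (s, q), i.e., 2s is the number of points x ∈ P where f(x)−x and f²(x)−f(x) have opposite signs. Then s equals the number of points of P lying strictly to the right of a that are mapped by f strictly to the left of a. -/
/-- For a map in the class `U` (unique fixed point `a`, points
move toward `a`) and a cycle `P` of period `q > 1` with over-rotation pair
`(s,q)`, the number `s` equals the number of points of `P` lying strictly to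
the right of `a` that are mapped strictly to the left of `a`. -/
theorem overrotation_pair_via_crossings
    (f : ℝ → ℝ) (hf : ContinuousOn f (Set.Icc 0 1))
    (hmaps : Set.MapsTo f (Set.Icc 0 1) (Set.Icc 0 1))
    (a : ℝ) (ha : a ∈ Set.Icc 0 1) (hfix : f a = a)
    (hleft : ∀ x ∈ Set.Icc 0 1, x < a → x < f x)
    (hright : ∀ x ∈ Set.Icc 0 1, a < x → f x < x)
    (x0 : ℝ) (hx0 : x0 ∈ Set.Icc 0 1) (q : ℕ) (hq : 1 < q)
    (hper : f^[q] x0 = x0)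
    (P : Set ℝ) (hP : P = {w | ∃ i < q, f^[i] x0 = w}) (hcard : P.ncard = q)
    (s : ℕ)
    (hs : 2 * s = {x ∈ P | (f x - x) * (f (f x) - f x) < 0}.ncard) :
    s = {x ∈ P | a < x ∧ f x < a}.ncard := by
  -- P is finite
  have hPim : P = (fun i => f^[i] x0) '' (Set.Iio q) := by
    rw [hP]; ext w; simp [Set.mem_image, eq_comm]
  have hPfin : P.Finite := by
    rw [hPim]; exact (Set.finite_Iio q).image _
  -- P ⊆ Icc 0 1
  have hPsub : P ⊆ Set.Icc 0 1 := by
    rw [hP]; rintro w ⟨i, _, rfl⟩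
    exact Set.MapsTo.iterate hmaps i hx0
  -- f maps P to P
  have hfm : Set.MapsTo f P P := by
    rw [hP]; rintro w ⟨i, hi, rfl⟩
    rcases lt_or_eq_of_le (Nat.succ_le_of_lt hi) with h | h
    · exact ⟨i + 1, h, Function.iterate_succ_apply' f i x0⟩
    · refine ⟨0, by omega, ?_⟩
      have h1 : i.succ = q := h
      simp only [Function.iterate_zero, id]
      rw [← Function.iterate_succ_apply' f i x0, h1, hper]
  -- f is surjective on P
  have hfs : Set.SurjOn f P P := by
    rw [hP]; rintro w ⟨i, hi, rfl⟩
    rcases Nat.eq_zero_or_pos i with h | h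
    · subst h
      refine ⟨f^[q - 1] x0, ⟨q - 1, by omega, rfl⟩, ?_⟩
      have h1 : (q - 1).succ = q := by omega
      simp only [Function.iterate_zero, id]
      rw [← Function.iterate_succ_apply' f (q - 1) x0, h1, hper]
    · refine ⟨f^[i - 1] x0, ⟨i - 1, by omega, rfl⟩, ?_⟩
      have h1 : (i - 1).succ = i := by omega
      rw [← Function.iterate_succ_apply' f (i - 1) x0, h1]
  have hbij : Set.BijOn f P P := (hPfin.surjOn_iff_bijOn_of_mapsTo hfm).mp hfs
  -- a ∉ P
  have haP : a ∉ P := by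
    intro haP
    rw [hP] at haP
    obtain ⟨i, hi, hia⟩ := haP
    have hx0a : x0 = a := by
      rw [← hper]
      have : q = (q - i) + i := by omega
      rw [this, Function.iterate_add_apply, hia, Function.iterate_fixed hfix]
    have : P = {a} := by
      rw [hP]; ext w
      constructor
      · rintro ⟨j, _, rfl⟩; rw [hx0a, Function.iterate_fixed hfix]; rfl
      · rintro rfl; exact ⟨0, by omega, by simp [hx0a]⟩
    rw [this] at hcard
    simp at hcard; omega
  -- sign facts
  have hsign : ∀ x ∈ P, (0 < f x - x ↔ x < a) ∧ (f x - x < 0 ↔ a < x) := by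
    intro x hx
    have hxI := hPsub hx
    have hxa : x ≠ a := fun h => haP (h ▸ hx)
    rcases lt_or_gt_of_ne hxa with h | h
    · have := hleft x hxI h
      constructor
      · constructor <;> intro <;> [exact h; linarith]
      · constructor <;> intro <;> linarith
    · have := hright x hxI h
      constructor
      · constructor <;> intro <;> linarith
      · constructor <;> intro <;> [exact h; linarith]
  -- the crossing set splits
  set A := {x ∈ P | x < a ∧ a < f x} with hA
  set B := {x ∈ P | a < x ∧ f x < a} with hB
  have hCrossing : {x ∈ P | (f x - x) * (f (f x) - f x) < 0} = A ∪ B := by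
    ext x
    simp only [Set.mem_setOf_eq, Set.mem_union, hA, hB]
    constructor
    · rintro ⟨hxP, hprod⟩
      have h1 := hsign x hxP
      have h2 := hsign (f x) (hfm hxP)
      rcases mul_neg_iff.mp hprod with ⟨hp, hn⟩ | ⟨hn, hp⟩
      · exact Or.inl ⟨hxP, h1.1.mp hp, h2.2.mp hn⟩
      · exact Or.inr ⟨hxP, h1.2.mp hn, h2.1.mp hp⟩
    · rintro (⟨hxP, h1, h2⟩ | ⟨hxP, h1, h2⟩)
      · refine ⟨hxP, mul_neg_of_pos_of_neg ?_ ?_⟩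
        · exact (hsign x hxP).1.mpr h1
        · exact (hsign (f x) (hfm hxP)).2.mpr h2
      · refine ⟨hxP, mul_neg_of_neg_of_pos ?_ ?_⟩
        · exact (hsign x hxP).2.mpr h1
        · exact (hsign (f x) (hfm hxP)).1.mpr h2
  -- sets R and S
  set R := {x ∈ P | a < x} with hR
  set S := {x ∈ P | a < f x} with hS
  have hRfin : R.Finite := hPfin.subset (fun x hx => hx.1)
  have hSfin : S.Finite := hPfin.subset (fun x hx => hx.1)
  have himg : f '' S = R := by
    ext y
    constructor
    · rintro ⟨x, ⟨hxP, hxa⟩, rfl⟩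
      exact ⟨hfm hxP, hxa⟩
    · rintro ⟨hyP, hya⟩
      obtain ⟨x, hxP, rfl⟩ := hfs hyP
      exact ⟨x, ⟨hxP, hya⟩, rfl⟩
  have hcardRS : S.ncard = R.ncard := by
    rw [← himg, Set.ncard_image_of_injOn (hbij.injOn.mono (fun x hx => hx.1))]
  -- A = S \ R, B = R \ S
  have hAeq : A = S \ R := by
    ext x
    simp only [hA, hS, hR, Set.mem_setOf_eq, Set.mem_diff]
    constructor
    · rintro ⟨hxP, h1, h2⟩
      exact ⟨⟨hxP, h2⟩, fun h => absurd h.2 (not_lt.mpr h1.le)⟩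
    · rintro ⟨⟨hxP, h2⟩, h3⟩
      have hxa : x ≠ a := fun h => haP (h ▸ hxP)
      refine ⟨hxP, ?_, h2⟩
      rcases lt_or_gt_of_ne hxa with h | h
      · exact h
      · exact absurd ⟨hxP, h⟩ h3
  have hBeq : B = R \ S := by
    ext x
    simp only [hB, hS, hR, Set.mem_setOf_eq, Set.mem_diff]
    constructor
    · rintro ⟨hxP, h1, h2⟩
      exact ⟨⟨hxP, h1⟩, fun h => absurd h.2 (not_lt.mpr h2.le)⟩
    · rintro ⟨⟨hxP, h1⟩, h3⟩
      have hfxa : f x ≠ a := fun h => haP (h ▸ hfm hxP)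
      refine ⟨hxP, h1, ?_⟩
      rcases lt_or_gt_of_ne hfxa with h | h
      · exact h
      · exact absurd ⟨hxP, h⟩ h3
  have hAB : A.ncard = B.ncard := by
    rw [hAeq, hBeq]
    exact (Set.ncard_eq_ncard_iff_ncard_diff_eq_ncard_diff hSfin hRfin).mp hcardRS
  have hdisj : Disjoint A B := by
    rw [Set.disjoint_left]
    rintro x ⟨_, h1, _⟩ ⟨_, h2, _⟩
    exact absurd h2 (not_lt.mpr h1.le)
  have hAfin : A.Finite := hPfin.subset (fun x hx => hx.1)
  have hBfin : B.Finite := hPfin.subset (fun x hx => hx.1)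
  have : 2 * s = A.ncard + B.ncard := by
    rw [hs, hCrossing, Set.ncard_union_eq hdisj hAfin hBfin]
  omega
end
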